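/- arXiv:1707.03091 — 2 statements merged into one kernel-verified Lean document; each statement's English description precedes it below -/
import Mathlib

section
/- Let r ≥ 2, let G be an r-graph and let S be a vertex cover of G. Then there exist a subset S' ⊆ S and a subgraph G' ⊆ G such that e(G') ≥ (r/2^r)·e(G) and every edge e of G' satisfies |e ∩ S'| = 1. -/
/-! Choose `T ⊆ S` uniformly at random. An edge `e` meeting `S` in `k ≥ 1` vertices meets `T` in
exactly one vertex with probability `k / 2^k ≥ r / 2^r`, so on average, and hence for some `T`,
at least an `r / 2^r` fraction of the edges cross `T` exactly once. -/

open Finset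

/-- `G` is an `r`-uniform hypergraph (an `r`-graph): every edge has exactly `r` vertices. -/
def IsUniform {V : Type*} (G : Finset (Finset V)) (r : ℕ) : Prop := ∀ e ∈ G, e.card = r

theorem mul_two_pow_le_mul_two_pow {k r : ℕ} (hk : 1 ≤ k) (hkr : k ≤ r) :
    r * 2 ^ k ≤ k * 2 ^ r := by
  have hr : r ≤ k * 2 ^ (r - k) :=
    calc r = (r - k) + k := (Nat.sub_add_cancel hkr).symm
      _ ≤ k * ((r - k) + 1) := by nlinarith
      _ ≤ k * 2 ^ (r - k) := Nat.mul_le_mul_left _ Nat.lt_two_pow_self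
  calc r * 2 ^ k ≤ k * 2 ^ (r - k) * 2 ^ k := Nat.mul_le_mul_right _ hr
    _ = k * 2 ^ r := by rw [mul_assoc, ← pow_add, Nat.sub_add_cancel hkr]

section Powerset

variable {V : Type*} [DecidableEq V] {A S : Finset V}

theorem filter_powerset_inter_eq_singleton {a : V} (ha : a ∈ A) (hAS : A ⊆ S) :
    {T ∈ S.powerset | A ∩ T = {a}} = (S \ A).powerset.image (insert a) := by
  ext T
  simp only [mem_filter, mem_powerset, mem_image]
  constructor
  · rintro ⟨hTS, hAT⟩
    refine ⟨T \ A, sdiff_subset_sdiff hTS le_rfl, ?_⟩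
    have haT : a ∈ T := (mem_inter.mp (hAT ▸ mem_singleton_self a)).2
    ext x
    by_cases hxA : x ∈ A
    · have : x ∈ T ↔ x = a := by
        rw [← mem_singleton, ← hAT, mem_inter, and_iff_right hxA]
      simp [hxA, this]
    · simp [hxA, ne_of_mem_of_not_mem ha hxA |>.symm]
  · rintro ⟨B, hB, rfl⟩
    refine ⟨insert_subset (hAS ha) (hB.trans sdiff_subset), ?_⟩
    ext x
    have : x ∈ B → x ∉ A := fun hx => (mem_sdiff.mp (hB hx)).2
    simp only [mem_inter, mem_insert, mem_singleton]
    constructor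
    · rintro ⟨hxA, rfl | hxB⟩
      · rfl
      · exact absurd hxA (this hxB)
    · rintro rfl
      exact ⟨ha, Or.inl rfl⟩

theorem card_filter_powerset_inter_eq_singleton {a : V} (ha : a ∈ A) (hAS : A ⊆ S) :
    #{T ∈ S.powerset | A ∩ T = {a}} = 2 ^ (#S - #A) := by
  rw [filter_powerset_inter_eq_singleton ha hAS, card_image_of_injOn, card_powerset,
    card_sdiff_of_subset hAS]
  intro B hB C hC hBC
  have hBA : a ∉ B := fun h => (mem_sdiff.mp (mem_powerset.mp hB h)).2 ha
  have hCA : a ∉ C := fun h => (mem_sdiff.mp (mem_powerset.mp hC h)).2 ha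
  rw [← erase_insert hBA, ← erase_insert hCA]
  exact congrArg (erase · a) hBC

theorem card_filter_powerset_card_inter_eq_one (hAS : A ⊆ S) :
    #{T ∈ S.powerset | #(A ∩ T) = 1} = #A * 2 ^ (#S - #A) := by
  have hunion : {T ∈ S.powerset | #(A ∩ T) = 1} =
      A.biUnion fun a => {T ∈ S.powerset | A ∩ T = {a}} := by
    ext T
    simp only [mem_filter, mem_biUnion, card_eq_one]
    constructor
    · rintro ⟨hT, a, ha⟩
      exact ⟨a, (mem_inter.mp (ha ▸ mem_singleton_self a)).1, hT, ha⟩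
    · rintro ⟨a, -, hT, ha⟩
      exact ⟨hT, a, ha⟩
  rw [hunion, card_biUnion, sum_congr rfl fun a ha =>
    card_filter_powerset_inter_eq_singleton ha hAS, sum_const, smul_eq_mul]
  intro a _ b _ hab
  refine disjoint_left.mpr fun T hTa hTb => hab ?_
  exact singleton_injective ((mem_filter.mp hTa).2.symm.trans (mem_filter.mp hTb).2)

end Powerset

section CrossCut

variable {V : Type*} [DecidableEq V] {r : ℕ} {S : Finset V}

theorem mul_two_pow_card_le_card_filter_powerset {e : Finset V} (he : #e = r)
    (hcov : ∃ x ∈ S, x ∈ e) :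
    r * 2 ^ #S ≤ 2 ^ r * #{T ∈ S.powerset | #(e ∩ T) = 1} := by
  obtain ⟨x, hxS, hxe⟩ := hcov
  have hk : 1 ≤ #(e ∩ S) := card_pos.mpr ⟨x, mem_inter.mpr ⟨hxe, hxS⟩⟩
  have hkr : #(e ∩ S) ≤ r := he ▸ card_le_card inter_subset_left
  have hks : #(e ∩ S) ≤ #S := card_le_card inter_subset_right
  have hfilter : {T ∈ S.powerset | #(e ∩ T) = 1} = {T ∈ S.powerset | #(e ∩ S ∩ T) = 1} :=
    filter_congr fun T hT => by rw [inter_assoc, inter_eq_right.mpr (mem_powerset.mp hT)]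
  rw [hfilter, card_filter_powerset_card_inter_eq_one inter_subset_right]
  calc r * 2 ^ #S = r * 2 ^ #(e ∩ S) * 2 ^ (#S - #(e ∩ S)) := by
        rw [mul_assoc, ← pow_add, Nat.add_sub_cancel' hks]
    _ ≤ #(e ∩ S) * 2 ^ r * 2 ^ (#S - #(e ∩ S)) :=
        Nat.mul_le_mul_right _ (mul_two_pow_le_mul_two_pow hk hkr)
    _ = 2 ^ r * (#(e ∩ S) * 2 ^ (#S - #(e ∩ S))) := by ring

theorem exists_subset_mul_card_le_card_filter {G : Finset (Finset V)} (hGr : IsUniform G r)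
    (hcov : ∀ e ∈ G, ∃ x ∈ S, x ∈ e) :
    ∃ T ⊆ S, r * #G ≤ 2 ^ r * #{e ∈ G | #(e ∩ T) = 1} := by
  have hcount : ∑ _T ∈ S.powerset, r * #G ≤ ∑ T ∈ S.powerset, 2 ^ r * #{e ∈ G | #(e ∩ T) = 1} :=
    calc ∑ _T ∈ S.powerset, r * #G = ∑ _e ∈ G, r * 2 ^ #S := by
          simp only [sum_const, card_powerset, smul_eq_mul]; ring
      _ ≤ ∑ e ∈ G, 2 ^ r * #{T ∈ S.powerset | #(e ∩ T) = 1} :=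
          sum_le_sum fun e he => mul_two_pow_card_le_card_filter_powerset (hGr e he) (hcov e he)
      _ = ∑ T ∈ S.powerset, 2 ^ r * #{e ∈ G | #(e ∩ T) = 1} := by
          simp only [← mul_sum]
          exact congrArg _ (sum_card_bipartiteAbove_eq_sum_card_bipartiteBelow _).symm
  obtain ⟨T, hT, hle⟩ := exists_le_of_sum_le (powerset_nonempty S) hcount
  exact ⟨T, mem_powerset.mp hT, hle⟩

end CrossCut

theorem cross_cut_general {V : Type*} [DecidableEq V] (r : ℕ)
    (G : Finset (Finset V)) (hGr : IsUniform G r)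
    (S : Finset V) (hcov : ∀ e ∈ G, ∃ x ∈ S, x ∈ e) :
    ∃ (S' : Finset V) (G' : Finset (Finset V)),
      S' ⊆ S ∧ G' ⊆ G ∧
      ((r : ℝ) / 2 ^ r) * (G.card : ℝ) ≤ (G'.card : ℝ) ∧
      ∀ e ∈ G', (e ∩ S').card = 1 := by
  obtain ⟨T, hTS, hle⟩ := exists_subset_mul_card_le_card_filter hGr hcov
  refine ⟨T, {e ∈ G | #(e ∩ T) = 1}, hTS, filter_subset _ _, ?_,
    fun e he => (mem_filter.mp he).2⟩
  rw [div_mul_eq_mul_div, div_le_iff₀ (by positivity), mul_comm _ ((2 : ℝ) ^ r)]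
  exact_mod_cast hle

/-- **Cross-cut lemma.** Let `r ≥ 2`, let `G` be an `r`-graph and `S` a vertex cover of `G`.
Then there are `S' ⊆ S` and a subgraph `G' ⊆ G` with `e(G') ≥ (r/2^r)·e(G)` such that every
edge of `G'` meets `S'` in exactly one vertex. -/
theorem cross_cut {V : Type*} [DecidableEq V] (r : ℕ) (hr : 2 ≤ r)
    (G : Finset (Finset V)) (hGr : IsUniform G r)
    (S : Finset V) (hcov : ∀ e ∈ G, ∃ x ∈ S, x ∈ e) :
    ∃ (S' : Finset V) (G' : Finset (Finset V)),
      S' ⊆ S ∧ G' ⊆ G ∧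
      ((r : ℝ) / 2 ^ r) * (G.card : ℝ) ≤ (G'.card : ℝ) ∧
      ∀ e ∈ G', (e ∩ S').card = 1 :=
  cross_cut_general r G hGr S hcov
end

section
/- Under the hypotheses of the C_{2k}-counting lemma for trees (T a tree of height h ≤ k in a graph G rooted at x with levels L_1,…,L_h; W ⊆ V(G)\V(T); F_j a bipartite subgraph between L_h and a set W_j ⊆ W in which every vertex w ∈ W_j sends all its F_j-edges into the leaf set S_e = L_h ∩ V(T_{z_e}) of the subtree rooted at a single vertex z_e = r(w) ∈ L_j, and every such w has at least k neighbours in L_h ∩ V(T_{r(w)}) lying outside T_z for each child z of r(w)): every path P of length 2m−1 in F_j, where m = k − (h − j), extends to a cycle of length 2k in G that contains a vertex of L_j. -/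
/-!
Orient the path so that it runs from a leaf `v₀ ∈ L_h` to `w ∈ W_j`. Two vertices of `W_j` that
are consecutive on the path share a leaf, and a leaf has only one ancestor in `L_j`, so all of
them have the same root `z = r(w)`; in particular `v₀` lies below `z`, say below its child `z'`.
Of the at least `k` neighbours of `w` below `z` but outside `T_{z'}`, at most `m - 1` are leaves
of the path, so some such `u` is fresh. The path, the edge `wu`, and the tree path from `u` up
to `z` and down to `v₀` form a cycle of length `(2m - 1) + 1 + 2(h - j) = 2k` through `z ∈ L_j`.
When `j = h` the tree paths are trivial and the path closes up directly (then `m = k = 1`).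
-/

/-- The vertex set of the tree `T` rooted at `x` (the vertices reachable from `x` in `T`). -/
def treeVerts {V : Type*} (T : SimpleGraph V) (x : V) : Set V :=
  {v | T.Reachable x v}

/-- The `j`-th level of the tree `T` rooted at `x`: the vertices of `T` at distance `j`
from the root. -/
def level {V : Type*} (T : SimpleGraph V) (x : V) (j : ℕ) : Set V :=
  {v | T.Reachable x v ∧ T.dist x v = j}

/-- `u` is a vertex of the subtree of `T` (rooted at `x`) hanging from `z`: `u` is a vertex of
the tree and the unique path from the root `x` to `u` passes through `z`. -/
def InSubtree {V : Type*} (T : SimpleGraph V) (x z u : V) : Prop :=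
  T.Reachable x u ∧ T.dist x u = T.dist x z + T.dist z u

namespace SimpleGraph

variable {V : Type*} {G : SimpleGraph V}

namespace Walk

theorem IsPath.append {u v w : V} {p : G.Walk u v} {q : G.Walk v w} (hp : p.IsPath)
    (hq : q.IsPath) (hpq : ∀ y ∈ p.support, y ∈ q.support → y = v) : (p.append q).IsPath := by
  have hq' := hq.support_nodup
  rw [← q.cons_tail_support, List.nodup_cons] at hq'
  rw [isPath_def, support_append, List.nodup_append]
  refine ⟨hp.support_nodup, hq'.2, fun y hy y' hy' hyy' => ?_⟩
  subst hyy'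
  exact hq'.1 (hpq y hy (List.mem_of_mem_tail hy') ▸ hy')

theorem dist_getVert_getVert_le {u v : V} (p : G.Walk u v) {r s : ℕ} (hrs : r ≤ s) :
    G.dist (p.getVert r) (p.getVert s) ≤ s - r := by
  have hend : (p.drop r).getVert (s - r) = p.getVert s := by
    rw [drop_getVert, Nat.add_sub_cancel' hrs]
  calc G.dist (p.getVert r) (p.getVert s)
      ≤ (((p.drop r).take (s - r)).copy rfl hend).length := dist_le _
    _ ≤ s - r := by simp

theorem dist_getVert_getVert {u v : V} {p : G.Walk u v} (hp : p.length = G.dist u v) {r s : ℕ}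
    (hrs : r ≤ s) (hs : s ≤ p.length) : G.dist (p.getVert r) (p.getVert s) = s - r := by
  refine le_antisymm (p.dist_getVert_getVert_le hrs) ?_
  have hr := p.dist_getVert_getVert_le (Nat.zero_le r)
  have hs' := p.dist_getVert_getVert_le hs
  rw [getVert_zero] at hr
  rw [getVert_length] at hs'
  have h₁ := (p.take r).reachable.dist_triangle_left v
  have h₂ := (p.drop s).reachable.dist_triangle_right (p.getVert r)
  omega

theorem exists_getVert_of_mem_support_drop {u v y : V} {p : G.Walk u v} {n : ℕ}
    (hn : n ≤ p.length) (hy : y ∈ (p.drop n).support) :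
    ∃ s, n ≤ s ∧ s ≤ p.length ∧ p.getVert s = y := by
  obtain ⟨i, rfl, hi⟩ := mem_support_iff_exists_getVert.1 hy
  rw [drop_length] at hi
  exact ⟨n + i, by omega, by omega, (drop_getVert p n i).symm⟩

end Walk

section CycleSeq

variable {p : ℕ → V} {a : ℕ}

/-- Read on `[0, a + q.length)`, this runs once around the cycle formed by `p` and `q`. -/
def cycleSeq (p : ℕ → V) (a : ℕ) (q : G.Walk (p a) (p 0)) (i : ℕ) : V :=
  if i < a then p i else q.getVert (i - a)

variable (q : G.Walk (p a) (p 0))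

theorem cycleSeq_of_le {i : ℕ} (hi : i ≤ a) : cycleSeq p a q i = p i := by
  rcases hi.lt_or_eq with hi | rfl
  · exact if_pos hi
  · simp [cycleSeq]

theorem cycleSeq_of_ge {i : ℕ} (hi : a ≤ i) : cycleSeq p a q i = q.getVert (i - a) :=
  if_neg (by omega)

theorem injOn_cycleSeq (hp : Set.InjOn p (Set.Iic a)) (hq : q.IsPath)
    (hpq : ∀ i, 0 < i → i < a → p i ∉ q.support) :
    Set.InjOn (cycleSeq p a q) (Set.Iio (a + q.length)) := by
  have hcross : ∀ i i', i < a → a ≤ i' → i' < a + q.length →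
      cycleSeq p a q i ≠ cycleSeq p a q i' := by
    intro i i' hi hi' hi'n heq
    rw [cycleSeq_of_le q hi.le, cycleSeq_of_ge q hi'] at heq
    rcases Nat.eq_zero_or_pos i with rfl | hi0
    · have := hq.getVert_injOn (Set.mem_ofPred.2 le_rfl) (Set.mem_ofPred.2 (by omega))
        (q.getVert_length.trans heq)
      omega
    · exact hpq i hi0 hi (heq ▸ q.getVert_mem_support _)
  intro i hi i' hi' heq
  simp only [Set.mem_Iio] at hi hi'
  rcases lt_or_ge i a with h₁ | h₁ <;> rcases lt_or_ge i' a with h₂ | h₂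
  · rw [cycleSeq_of_le q h₁.le, cycleSeq_of_le q h₂.le] at heq
    exact hp (Set.mem_Iic.2 h₁.le) (Set.mem_Iic.2 h₂.le) heq
  · exact absurd heq (hcross i i' h₁ h₂ hi')
  · exact absurd heq.symm (hcross i' i h₂ h₁ hi)
  · rw [cycleSeq_of_ge q h₁, cycleSeq_of_ge q h₂] at heq
    have := hq.getVert_injOn (Set.mem_ofPred.2 (by omega)) (Set.mem_ofPred.2 (by omega)) heq
    omega

theorem adj_cycleSeq (hpadj : ∀ i < a, G.Adj (p i) (p (i + 1))) (hq : 0 < q.length) {i : ℕ}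
    (hi : i < a + q.length) :
    G.Adj (cycleSeq p a q i) (cycleSeq p a q ((i + 1) % (a + q.length))) := by
  rcases (Nat.succ_le_of_lt hi).lt_or_eq with hi' | hi'
  · rw [Nat.mod_eq_of_lt hi']
    rcases lt_or_ge i a with hia | hia
    · rw [cycleSeq_of_le q hia.le, cycleSeq_of_le q hia]
      exact hpadj i hia
    · rw [cycleSeq_of_ge q hia, cycleSeq_of_ge q (by omega), show i + 1 - a = i - a + 1 by omega]
      exact q.adj_getVert_succ (by omega)
  · have hend := q.adj_getVert_succ (i := i - a) (by omega)
    rw [show i - a + 1 = q.length by omega, q.getVert_length] at hend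
    rwa [show i + 1 = a + q.length from hi', Nat.mod_self, cycleSeq_of_le q (Nat.zero_le a),
      cycleSeq_of_ge q (by omega)]

theorem mem_image_cycleSeq_of_mem_support (hq : 0 < q.length) {y : V} (hy : y ∈ q.support) :
    y ∈ cycleSeq p a q '' Set.Iio (a + q.length) := by
  obtain ⟨s, rfl, hs⟩ := Walk.mem_support_iff_exists_getVert.1 hy
  rcases hs.lt_or_eq with hs | rfl
  · exact ⟨a + s, by simp only [Set.mem_Iio]; omega, by simp [cycleSeq_of_ge]⟩
  · exact ⟨0, by simp only [Set.mem_Iio]; omega, by rw [cycleSeq_of_le q (Nat.zero_le a),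
      q.getVert_length]⟩

theorem sym2_eq_cycleSeq {i : ℕ} (hi : i < a) (hq : 0 < q.length) :
    s(p i, p (i + 1)) = s(cycleSeq p a q i, cycleSeq p a q ((i + 1) % (a + q.length))) := by
  rw [Nat.mod_eq_of_lt (by omega), cycleSeq_of_le q hi.le, cycleSeq_of_le q hi]

end CycleSeq

section Tree

variable {T : SimpleGraph V} {x : V}

theorem inSubtree_self {y : V} (hy : T.Reachable x y) : InSubtree T x y y :=
  ⟨hy, by simp⟩

namespace Walk

variable {u : V} {Q : T.Walk x u}

theorem getVert_mem_level (hQ : Q.length = T.dist x u) {s : ℕ} (hs : s ≤ Q.length) :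
    Q.getVert s ∈ level T x s :=
  ⟨(Q.take s).reachable, by simpa using dist_getVert_getVert hQ (Nat.zero_le s) hs⟩

theorem inSubtree_getVert_getVert (hQ : Q.length = T.dist x u) {r s : ℕ} (hrs : r ≤ s)
    (hs : s ≤ Q.length) : InSubtree T x (Q.getVert r) (Q.getVert s) := by
  refine ⟨(Q.take s).reachable, ?_⟩
  rw [(Q.getVert_mem_level hQ hs).2, (Q.getVert_mem_level hQ (hrs.trans hs)).2,
    dist_getVert_getVert hQ hrs hs]
  omega

end Walk

namespace IsAcyclic

theorem getVert_eq_of_inSubtree (hT : T.IsAcyclic) {u z : V} {Q : T.Walk x u}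
    (hQ : Q.length = T.dist x u) (hz : T.Reachable x z) (hzu : InSubtree T x z u) :
    Q.getVert (T.dist x z) = z := by
  obtain ⟨R, hR⟩ := hz.exists_walk_length_eq_dist
  obtain ⟨P, hP⟩ := (hz.symm.trans hzu.1).exists_walk_length_eq_dist
  have hRP : (R.append P).length = T.dist x u := by rw [Walk.length_append, hR, hP, hzu.2]
  have hQRP : Q = R.append P := congrArg Subtype.val <|
    (hT.subsingleton_path x u).elim ⟨Q, Q.isPath_of_length_eq_dist hQ⟩
      ⟨_, (R.append P).isPath_of_length_eq_dist hRP⟩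
  rw [hQRP, Walk.getVert_append, ← hR]
  simp

theorem eq_of_inSubtree (hT : T.IsAcyclic) {j : ℕ} {z₁ z₂ u : V} (h₁ : z₁ ∈ level T x j)
    (h₂ : z₂ ∈ level T x j) (hu₁ : InSubtree T x z₁ u) (hu₂ : InSubtree T x z₂ u) : z₁ = z₂ := by
  obtain ⟨Q, hQ⟩ := hu₁.1.exists_walk_length_eq_dist
  rw [← hT.getVert_eq_of_inSubtree hQ h₁.1 hu₁, ← hT.getVert_eq_of_inSubtree hQ h₂.1 hu₂, h₁.2,
    h₂.2]

theorem getVert_eq_getVert_of_le (hT : T.IsAcyclic) {u₁ u₂ : V} {Q₁ : T.Walk x u₁}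
    {Q₂ : T.Walk x u₂} (hQ₁ : Q₁.length = T.dist x u₁) (hQ₂ : Q₂.length = T.dist x u₂) {r s : ℕ}
    (hs₁ : s ≤ Q₁.length) (hs₂ : s ≤ Q₂.length) (h : Q₁.getVert s = Q₂.getVert s) (hrs : r ≤ s) :
    Q₁.getVert r = Q₂.getVert r :=
  hT.eq_of_inSubtree (Q₁.getVert_mem_level hQ₁ (hrs.trans hs₁))
    (Q₂.getVert_mem_level hQ₂ (hrs.trans hs₂)) (Q₁.inSubtree_getVert_getVert hQ₁ hrs hs₁)
    (h ▸ Q₂.inSubtree_getVert_getVert hQ₂ hrs hs₂)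

theorem exists_isPath_through (hT : T.IsAcyclic) {h j : ℕ} {u ℓ z z' : V}
    (hu : u ∈ level T x h) (hℓ : ℓ ∈ level T x h) (hz : z ∈ level T x j)
    (hzu : InSubtree T x z u) (hzℓ : InSubtree T x z ℓ) (hz' : z' ∈ level T x (j + 1))
    (hz'ℓ : InSubtree T x z' ℓ) (hz'u : ¬ InSubtree T x z' u) :
    ∃ t : T.Walk u ℓ, t.IsPath ∧ t.length = 2 * (h - j) ∧ z ∈ t.support ∧
      ∀ y ∈ t.support, y ∈ treeVerts T x ∧ (T.dist x y = h → y = u ∨ y = ℓ) := by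
  obtain ⟨Q₁, hQ₁⟩ := hu.1.exists_walk_length_eq_dist
  obtain ⟨Q₂, hQ₂⟩ := hℓ.1.exists_walk_length_eq_dist
  have hjh : j + 1 ≤ h := by have := hz'ℓ.2; have := hz'.2; have := hℓ.2; omega
  have hQ₁h : Q₁.length = h := hQ₁.trans hu.2
  have hQ₂h : Q₂.length = h := hQ₂.trans hℓ.2
  have hz₁ : Q₁.getVert j = z := hz.2 ▸ hT.getVert_eq_of_inSubtree hQ₁ hz.1 hzu
  have hz₂ : Q₂.getVert j = z := hz.2 ▸ hT.getVert_eq_of_inSubtree hQ₂ hz.1 hzℓ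
  have hz'₂ : Q₂.getVert (j + 1) = z' := hz'.2 ▸ hT.getVert_eq_of_inSubtree hQ₂ hz'.1 hz'ℓ
  let t : T.Walk u ℓ := ((Q₁.drop j).reverse.copy rfl (hz₁.trans hz₂.symm)).append (Q₂.drop j)
  have hsupp : ∀ y ∈ t.support, y ∈ (Q₁.drop j).support ∨ y ∈ (Q₂.drop j).support := by
    simp [t, Walk.mem_support_append_iff]
  refine ⟨t, ?_, by simp [t]; omega, ?_, fun y hy => ?_⟩
  · refine Walk.IsPath.append
      ((Walk.isPath_copy _ _ _).2 ((Q₁.isPath_of_length_eq_dist hQ₁).drop j).reverse)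
      ((Q₂.isPath_of_length_eq_dist hQ₂).drop j) fun y hy₁ hy₂ => ?_
    obtain ⟨s, hjs, hs₁, rfl⟩ := Q₁.exists_getVert_of_mem_support_drop (n := j) (by omega)
      (by simpa using hy₁)
    obtain ⟨s₂, -, hs₂, hy⟩ := Q₂.exists_getVert_of_mem_support_drop (by omega) hy₂
    obtain rfl : s₂ = s := by
      rw [← (Q₂.getVert_mem_level hQ₂ hs₂).2, hy, (Q₁.getVert_mem_level hQ₁ hs₁).2]
    rcases hjs.eq_or_lt with rfl | hlt
    · exact hz₁.trans hz₂.symm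
    · refine absurd ?_ hz'u
      rw [← hz'₂, ← hT.getVert_eq_getVert_of_le hQ₁ hQ₂ hs₁ hs₂ hy.symm hlt]
      simpa using Q₁.inSubtree_getVert_getVert hQ₁ (s := Q₁.length) (by omega) le_rfl
  · rw [← hz₂]
    exact Walk.mem_support_append_iff _ _ |>.2 (Or.inr (Q₂.drop j).start_mem_support)
  · rcases hsupp y hy with hy | hy
    · obtain ⟨s, -, hs, rfl⟩ := Q₁.exists_getVert_of_mem_support_drop (by omega) hy
      refine ⟨(Q₁.getVert_mem_level hQ₁ hs).1, fun hd => Or.inl ?_⟩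
      rw [(Q₁.getVert_mem_level hQ₁ hs).2] at hd
      rw [hd, ← hQ₁h, Walk.getVert_length]
    · obtain ⟨s, -, hs, rfl⟩ := Q₂.exists_getVert_of_mem_support_drop (by omega) hy
      refine ⟨(Q₂.getVert_mem_level hQ₂ hs).1, fun hd => Or.inr ?_⟩
      rw [(Q₂.getVert_mem_level hQ₂ hs).2] at hd
      rw [hd, ← hQ₂h, Walk.getVert_length]

end IsAcyclic

end Tree

end SimpleGraph

open SimpleGraph

section Sector

variable {V : Type*} {T F : SimpleGraph V} {x : V} {h j k : ℕ} {Wj : Set V}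

/-- `z` can serve as the root `r(w)` of `w`. -/
def IsSectorRoot (T F : SimpleGraph V) (x : V) (h j k : ℕ) (w z : V) : Prop :=
  z ∈ level T x j ∧
    (∀ u : V, F.Adj w u → u ∈ level T x h ∧ InSubtree T x z u) ∧
    (∀ z' : V, T.Adj z z' → T.dist x z' = T.dist x z + 1 →
      k ≤ {u : V | F.Adj w u ∧ u ∈ level T x h ∧ InSubtree T x z u ∧
            ¬ InSubtree T x z' u}.ncard)

/-- `S_e ∪ r⁻¹(z_e)` for `z_e = z`. -/
def sector (T F : SimpleGraph V) (x : V) (h j k : ℕ) (Wj : Set V) (z : V) : Set V :=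
  {u | u ∈ level T x h ∧ InSubtree T x z u} ∪ {w | w ∈ Wj ∧ IsSectorRoot T F x h j k w z}

theorem exists_mem_sector_of_adj
    (hbip : ∀ u w : V, F.Adj u w → (u ∈ level T x h ∧ w ∈ Wj) ∨ (u ∈ Wj ∧ w ∈ level T x h))
    (hsector : ∀ w ∈ Wj, ∃ z, IsSectorRoot T F x h j k w z) {y y' : V} (hyy' : F.Adj y y') :
    ∃ z ∈ level T x j, y ∈ sector T F x h j k Wj z := by
  rcases hbip y y' hyy' with ⟨-, hy'⟩ | ⟨hy, -⟩
  · obtain ⟨z, hz⟩ := hsector y' hy'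
    exact ⟨z, hz.1, Or.inl (hz.2.1 y hyy'.symm)⟩
  · obtain ⟨z, hz⟩ := hsector y hy
    exact ⟨z, hz.1, Or.inr ⟨hy, hz⟩⟩

/-- A leaf has only one ancestor in `L_j`, so it determines `r(w)` for each of its neighbours. -/
theorem mem_sector_of_adj (hT : T.IsAcyclic) (hdisj : Disjoint Wj (treeVerts T x))
    (hbip : ∀ u w : V, F.Adj u w → (u ∈ level T x h ∧ w ∈ Wj) ∨ (u ∈ Wj ∧ w ∈ level T x h))
    (hsector : ∀ w ∈ Wj, ∃ z, IsSectorRoot T F x h j k w z) {y y' z : V}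
    (hz : z ∈ level T x j) (hy : y ∈ sector T F x h j k Wj z) (hyy' : F.Adj y y') :
    y' ∈ sector T F x h j k Wj z := by
  rcases hy with ⟨hy, hzy⟩ | ⟨-, -, hnbr, -⟩
  · have hy' : y' ∈ Wj := (hbip y y' hyy').elim And.right
      fun h => absurd hy.1 (Set.disjoint_left.1 hdisj h.1)
    obtain ⟨z₁, hz₁⟩ := hsector y' hy'
    obtain rfl : z₁ = z := hT.eq_of_inSubtree hz₁.1 hz (hz₁.2.1 y hyy'.symm).2 hzy
    exact Or.inr ⟨hy', hz₁⟩
  · exact Or.inl (hnbr y' hyy')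

theorem exists_isSectorRoot_of_path (hT : T.IsAcyclic) (hdisj : Disjoint Wj (treeVerts T x))
    (hbip : ∀ u w : V, F.Adj u w → (u ∈ level T x h ∧ w ∈ Wj) ∨ (u ∈ Wj ∧ w ∈ level T x h))
    (hsector : ∀ w ∈ Wj, ∃ z, IsSectorRoot T F x h j k w z) {v : ℕ → V} {n : ℕ} (hn : 0 < n)
    (hadj : ∀ i < n, F.Adj (v i) (v (i + 1))) (hv0 : v 0 ∈ level T x h) (hvn : v n ∈ Wj) :
    ∃ z, IsSectorRoot T F x h j k (v n) z ∧ InSubtree T x z (v 0) := by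
  obtain ⟨z, hz, hv0z⟩ := exists_mem_sector_of_adj hbip hsector (hadj 0 hn)
  have hpath : ∀ i ≤ n, v i ∈ sector T F x h j k Wj z := by
    intro i hi
    induction i with
    | zero => exact hv0z
    | succ i ih => exact mem_sector_of_adj hT hdisj hbip hsector hz (ih (by omega)) (hadj i hi)
  refine ⟨z, ?_, ?_⟩
  · rcases hpath n le_rfl with hL | hW
    · exact absurd hL.1.1 (Set.disjoint_left.1 hdisj hvn)
    · exact hW.2
  · rcases hv0z with hL | hW
    · exact hL.2
    · exact absurd hv0.1 (Set.disjoint_left.1 hdisj hW.1)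

end Sector

/-- The path `ω, u, …, z, …, ℓ` closing the cycle: `u` is a fresh neighbour of `ω` below a child
of `z` other than the one above `ℓ`, or `u = ℓ = z` when `j = h`. -/
theorem exists_closing_path {V : Type*} {G T F : SimpleGraph V} {x : V} {h j k : ℕ}
    {Wj : Set V} (hT : T.IsAcyclic) (hTG : T ≤ G) (hFG : F ≤ G)
    (hdisj : Disjoint Wj (treeVerts T x)) {ω ℓ y z : V} (hω : ω ∈ Wj)
    (hroot : IsSectorRoot T F x h j k ω z) (hωy : F.Adj ω y) (hℓ : ℓ ∈ level T x h)
    (hzℓ : InSubtree T x z ℓ) (L : Finset V) (hL : ∀ u ∈ L, u ∈ level T x h) (hLk : L.card < k) :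
    ∃ q : G.Walk ω ℓ, q.IsPath ∧ q.length = 2 * (h - j) + 1 ∧ z ∈ q.support ∧
      ∀ u ∈ q.support, u ≠ ω → u ≠ ℓ → u ∈ treeVerts T x ∧ u ∉ L := by
  obtain ⟨hz, hnbr, hcount⟩ := hroot
  have hωT : ω ∉ treeVerts T x := Set.disjoint_left.1 hdisj hω
  rcases (show j ≤ h by have := hzℓ.2; have := hz.2; have := hℓ.2; omega).eq_or_lt
    with rfl | hjh
  · have hyz : y = z := hT.eq_of_inSubtree (hnbr y hωy).1 hz (inSubtree_self (hnbr y hωy).1.1)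
      (hnbr y hωy).2
    have hℓz : ℓ = z := hT.eq_of_inSubtree hℓ hz (inSubtree_self hℓ.1) hzℓ
    subst hyz hℓz
    refine ⟨.cons (hFG hωy) .nil, ?_, by simp, by simp, by simp⟩
    simpa using fun h : ω = ℓ => hωT (h ▸ hℓ.1)
  · obtain ⟨Q, hQ⟩ := hℓ.1.exists_walk_length_eq_dist
    have hQz : Q.getVert j = z := hz.2 ▸ hT.getVert_eq_of_inSubtree hQ hz.1 hzℓ
    have hjQ : j + 1 ≤ Q.length := by rw [hQ, hℓ.2]; omega
    have hz' := Q.getVert_mem_level hQ hjQ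
    have hzz' : T.Adj z (Q.getVert (j + 1)) := hQz ▸ Q.adj_getVert_succ (by omega)
    obtain ⟨u, ⟨huF, hu, hzu, hz'u⟩, huL⟩ := Set.exists_mem_notMem_of_ncard_lt_ncard
      ((Set.ncard_coe_finset L ▸ hLk).trans_le (hcount _ hzz' (by rw [hz'.2, hz.2])))
    obtain ⟨t, ht, htlen, hzt, htsupp⟩ := hT.exists_isPath_through hu hℓ hz hzu hzℓ hz'
      (by simpa using Q.inSubtree_getVert_getVert hQ hjQ le_rfl) hz'u
    refine ⟨.cons (hFG huF) (t.mapLe hTG), ?_, by simp [htlen], by simp [hzt], ?_⟩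
    · rw [Walk.cons_isPath_iff, Walk.support_mapLe_eq_support]
      exact ⟨ht.mapLe hTG, fun hmem => hωT (htsupp ω hmem).1⟩
    · intro y hy hyω hyℓ
      rw [Walk.support_cons, Walk.support_mapLe_eq_support, List.mem_cons] at hy
      obtain ⟨hyT, hyh⟩ := htsupp y (hy.resolve_left hyω)
      refine ⟨hyT, fun hyL => ?_⟩
      rcases hyh (hL y hyL).2 with rfl | rfl
      exacts [huL hyL, hyℓ rfl]

section Sequences

variable {V : Type*}

theorem mem_of_even_of_odd {F : SimpleGraph V} {A B : Set V} (hAB : Disjoint A B)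
    (hF : ∀ u w : V, F.Adj u w → (u ∈ A ∧ w ∈ B) ∨ (u ∈ B ∧ w ∈ A)) {v : ℕ → V} {n : ℕ}
    (hadj : ∀ i < n, F.Adj (v i) (v (i + 1))) (hv0 : v 0 ∈ A) :
    ∀ i ≤ n, (Even i → v i ∈ A) ∧ (Odd i → v i ∈ B) := by
  intro i hi
  induction i with
  | zero => simpa using hv0
  | succ i ih =>
    obtain ⟨hA, hB⟩ := ih (by omega)
    have hstep := hF _ _ (hadj i hi)
    rcases Nat.even_or_odd i with he | ho
    · have hi' := hstep.resolve_right fun h => Set.disjoint_left.1 hAB (hA he) h.1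
      exact ⟨fun h => absurd he (Nat.even_add_one.1 h), fun _ => hi'.2⟩
    · have hi' := hstep.resolve_left fun h => Set.disjoint_left.1 hAB h.1 (hB ho)
      exact ⟨fun _ => hi'.2, fun h => absurd ho (Nat.odd_add_one.1 h)⟩

variable {p : ℕ → V} {a : ℕ}

theorem injOn_rev (hp : Set.InjOn p (Set.Iic a)) : Set.InjOn (fun i => p (a - i)) (Set.Iic a) :=
  fun i hi i' hi' h => by
    have := hp (Set.mem_Iic.2 (Nat.sub_le a i)) (Set.mem_Iic.2 (Nat.sub_le a i')) h
    simp only [Set.mem_Iic] at hi hi'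
    omega

theorem adj_rev {G : SimpleGraph V} (hp : ∀ i < a, G.Adj (p i) (p (i + 1))) :
    ∀ i < a, G.Adj (p (a - i)) (p (a - (i + 1))) := fun i hi => by
  simpa [show a - i = a - (i + 1) + 1 by omega] using (hp (a - (i + 1)) (by omega)).symm

theorem image_sym2_rev :
    (fun i => s(p (a - i), p (a - (i + 1)))) '' Set.Iio a =
      (fun i => s(p i, p (i + 1))) '' Set.Iio a := by
  ext e
  constructor <;> rintro ⟨i, hi, rfl⟩ <;> simp only [Set.mem_Iio] at hi <;>
    refine ⟨a - (i + 1), by simp only [Set.mem_Iio]; omega, ?_⟩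
  · simp [show a - (i + 1) + 1 = a - i by omega, Sym2.eq_swap]
  · simp [show a - (a - (i + 1)) = i + 1 by omega, show a - (a - (i + 1) + 1) = i by omega,
      Sym2.eq_swap]

end Sequences

theorem exists_cycle_of_path_of_mem_level {V : Type*} {G T F : SimpleGraph V} {x : V}
    {h j k : ℕ} {Wj : Set V} (hT : T.IsAcyclic) (hTG : T ≤ G) (hFG : F ≤ G)
    (hdisj : Disjoint Wj (treeVerts T x))
    (hbip : ∀ u w : V, F.Adj u w → (u ∈ level T x h ∧ w ∈ Wj) ∨ (u ∈ Wj ∧ w ∈ level T x h))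
    (hsector : ∀ w ∈ Wj, ∃ z, IsSectorRoot T F x h j k w z) {m : ℕ} (hm : 0 < m)
    (hk : m + (h - j) = k) {v : ℕ → V} (hinj : Set.InjOn v (Set.Iic (2 * m - 1)))
    (hadj : ∀ i < 2 * m - 1, F.Adj (v i) (v (i + 1))) (hv0 : v 0 ∈ level T x h) :
    ∃ w : ℕ → V, Set.InjOn w (Set.Iio (2 * k)) ∧
      (∀ i < 2 * k, G.Adj (w i) (w ((i + 1) % (2 * k)))) ∧
      (∃ i < 2 * k, w i ∈ level T x j) ∧
      ((fun i => s(v i, v (i + 1))) '' Set.Iio (2 * m - 1)) ⊆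
        ((fun i => s(w i, w ((i + 1) % (2 * k)))) '' Set.Iio (2 * k)) := by
  classical
  have halt := mem_of_even_of_odd ((hdisj.mono_right fun _ hy => hy.1).symm) hbip hadj hv0
  have hva : v (2 * m - 1) ∈ Wj := (halt _ le_rfl).2 ⟨m - 1, by omega⟩
  obtain ⟨z, hroot, hzv0⟩ :=
    exists_isSectorRoot_of_path hT hdisj hbip hsector (by omega) hadj hv0 hva
  -- the interior leaves of the path, which the closing path must avoid
  let L := (Finset.Icc 1 (m - 1)).image fun t => v (2 * t)
  have hL : ∀ u ∈ L, u ∈ level T x h := by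
    simp only [L, Finset.mem_image, Finset.mem_Icc]
    rintro _ ⟨t, ht, rfl⟩
    exact (halt _ (by omega)).1 (even_two_mul t)
  have hLk : L.card < k := calc
    L.card ≤ (Finset.Icc 1 (m - 1)).card := Finset.card_image_le
    _ < k := by rw [Nat.card_Icc]; omega
  have hlast := hadj (2 * m - 2) (by omega)
  rw [show 2 * m - 2 + 1 = 2 * m - 1 by omega] at hlast
  obtain ⟨q, hq, hqlen, hzq, hqsupp⟩ :=
    exists_closing_path hT hTG hFG hdisj hva hroot hlast.symm hv0 hzv0 L hL hLk
  have hinterior : ∀ i, 0 < i → i < 2 * m - 1 → v i ∉ q.support := by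
    intro i hi₀ hi hmem
    have hne : ∀ i', i' ≤ 2 * m - 1 → i' ≠ i → v i ≠ v i' := fun i' hi' hii' h =>
      hii' (hinj (Set.mem_Iic.2 hi') (Set.mem_Iic.2 hi.le) h.symm)
    obtain ⟨hiT, hiL⟩ := hqsupp _ hmem (hne _ le_rfl (by omega)) (hne 0 (by omega) (by omega))
    rcases Nat.even_or_odd i with ⟨t, rfl⟩ | hodd
    · exact hiL (Finset.mem_image.2 ⟨t, Finset.mem_Icc.2 ⟨by omega, by omega⟩, by rw [two_mul]⟩)
    · exact Set.disjoint_left.1 hdisj ((halt i hi.le).2 hodd) hiT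
  have hq0 : 0 < q.length := by omega
  rw [show 2 * k = 2 * m - 1 + q.length by omega]
  refine ⟨cycleSeq v _ q, injOn_cycleSeq q hinj hq hinterior,
    fun i hi => adj_cycleSeq q (fun i hi => hFG (hadj i hi)) hq0 hi, ?_, ?_⟩
  · obtain ⟨i, hi, hiz⟩ := mem_image_cycleSeq_of_mem_support q hq0 hzq
    exact ⟨i, hi, hiz ▸ hroot.1⟩
  · rintro _ ⟨i, hi, rfl⟩
    exact ⟨i, Set.mem_Iio.2 (by simp only [Set.mem_Iio] at hi; omega),
      (sym2_eq_cycleSeq q hi hq0).symm⟩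

theorem path_extends_to_cycle_general {V : Type*}
    (G T F : SimpleGraph V) (x : V) (h k j : ℕ)
    (hhk : h ≤ k) (hj1 : 1 ≤ j) (hjh : j ≤ h)
    (hTG : T ≤ G) (hFG : F ≤ G)
    (hacyc : T.IsAcyclic)
    (W Wj : Set V) (hWjW : Wj ⊆ W) (hW : Disjoint W (treeVerts T x))
    (hbip : ∀ u w : V, F.Adj u w →
      (u ∈ level T x h ∧ w ∈ Wj) ∨ (u ∈ Wj ∧ w ∈ level T x h))
    (hsector : ∀ w ∈ Wj, ∃ z : V, z ∈ level T x j ∧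
      (∀ u : V, F.Adj w u → u ∈ level T x h ∧ InSubtree T x z u) ∧
      (∀ z' : V, T.Adj z z' → T.dist x z' = T.dist x z + 1 →
        k ≤ {u : V | F.Adj w u ∧ u ∈ level T x h ∧ InSubtree T x z u ∧
              ¬ InSubtree T x z' u}.ncard)) :
    ∀ v : ℕ → V, Set.InjOn v (Set.Iic (2 * (k - (h - j)) - 1)) →
      (∀ i < 2 * (k - (h - j)) - 1, F.Adj (v i) (v (i + 1))) →
      ∃ w : ℕ → V, Set.InjOn w (Set.Iio (2 * k)) ∧
        (∀ i < 2 * k, G.Adj (w i) (w ((i + 1) % (2 * k)))) ∧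
        (∃ i < 2 * k, w i ∈ level T x j) ∧
        ((fun i => s(v i, v (i + 1))) '' Set.Iio (2 * (k - (h - j)) - 1)) ⊆
          ((fun i => s(w i, w ((i + 1) % (2 * k)))) '' Set.Iio (2 * k)) := by
  intro v hinj hadj
  have hdisj : Disjoint Wj (treeVerts T x) := hW.mono_left hWjW
  have hm : 0 < k - (h - j) := by omega
  have hk : k - (h - j) + (h - j) = k := by omega
  rcases hbip _ _ (hadj 0 (by omega)) with ⟨hv0, -⟩ | ⟨hv0, -⟩
  · exact exists_cycle_of_path_of_mem_level hacyc hTG hFG hdisj hbip hsector hm hk hinj hadj hv0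
  · -- the path starts in `W_j`, so it ends at a leaf: run it backwards
    have hend := (mem_of_even_of_odd (hdisj.mono_right fun _ hy => hy.1)
      (fun u w huw => (hbip u w huw).symm) hadj hv0 _ le_rfl).2 ⟨k - (h - j) - 1, by omega⟩
    obtain ⟨w, hwinj, hwadj, hwj, hwedges⟩ :=
      exists_cycle_of_path_of_mem_level hacyc hTG hFG hdisj hbip hsector hm hk (injOn_rev hinj)
        (adj_rev hadj) (by simpa using hend)
    exact ⟨w, hwinj, hwadj, hwj, image_sym2_rev ▸ hwedges⟩

/-- **Path-to-cycle extension claim.** Let `T ≤ G` be a tree of height `h ≤ k` rooted at `x`,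
`W` disjoint from `V(T)`, and let `F ≤ G` be a bipartite graph between `L_h` and `W_j ⊆ W` in
which every `w ∈ W_j` sends all its edges into the leaves `L_h ∩ V(T_{z})` of the subtree
rooted at a single vertex `z = r(w) ∈ L_j`, and has at least `k` neighbours in
`L_h ∩ V(T_{r(w)})` outside `T_{z'}` for each child `z'` of `r(w)`.  Then every path of length
`2m - 1` in `F`, where `m = k - (h - j)`, extends to a cycle of length `2k` in `G` containing a
vertex of `L_j`. -/
theorem path_extends_to_cycle {V : Type*} [Fintype V]
    (G T F : SimpleGraph V) (x : V) (h k j : ℕ)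
    (hh : 1 ≤ h) (hhk : h ≤ k) (hj1 : 1 ≤ j) (hjh : j ≤ h)
    (hTG : T ≤ G) (hFG : F ≤ G)
    (hacyc : T.IsAcyclic)
    (hconn : ∀ v ∈ T.support, T.Reachable x v)
    (hheight : ∀ v : V, T.Reachable x v → T.dist x v ≤ h)
    (W Wj : Set V) (hWjW : Wj ⊆ W) (hW : Disjoint W (treeVerts T x))
    (hbip : ∀ u w : V, F.Adj u w →
      (u ∈ level T x h ∧ w ∈ Wj) ∨ (u ∈ Wj ∧ w ∈ level T x h))
    (hsector : ∀ w ∈ Wj, ∃ z : V, z ∈ level T x j ∧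
      (∀ u : V, F.Adj w u → u ∈ level T x h ∧ InSubtree T x z u) ∧
      (∀ z' : V, T.Adj z z' → T.dist x z' = T.dist x z + 1 →
        k ≤ {u : V | F.Adj w u ∧ u ∈ level T x h ∧ InSubtree T x z u ∧
              ¬ InSubtree T x z' u}.ncard)) :
    ∀ v : ℕ → V, Set.InjOn v (Set.Iic (2 * (k - (h - j)) - 1)) →
      (∀ i < 2 * (k - (h - j)) - 1, F.Adj (v i) (v (i + 1))) →
      ∃ w : ℕ → V, Set.InjOn w (Set.Iio (2 * k)) ∧
        (∀ i < 2 * k, G.Adj (w i) (w ((i + 1) % (2 * k)))) ∧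
        (∃ i < 2 * k, w i ∈ level T x j) ∧
        ((fun i => s(v i, v (i + 1))) '' Set.Iio (2 * (k - (h - j)) - 1)) ⊆
          ((fun i => s(w i, w ((i + 1) % (2 * k)))) '' Set.Iio (2 * k)) :=
  path_extends_to_cycle_general G T F x h k j hhk hj1 hjh hTG hFG hacyc W Wj hWjW hW hbip hsector
end
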